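/- In the setting below, let t ∈ [0,T], c_0 ∈ (0,1], and let x, x' ∈ ℝ^{nd} with d(x,x') ≤ 1 satisfy the off-diagonal condition T − t ≤ c_0 d(x,x')^{α}. Let θ_{t,·}(x) and θ_{t,·}(x') be any flows started from x and x' at time t. Then there exists a constant C ≥ 1, depending only on n, d, α, β, the matrix A and the Hölder constant K of F, such that d(θ_{t,T}(x), θ_{t,T}(x')) ≤ C d(x,x'). -/

import Mathlib

open MeasureTheory

/-- The `i`-th d-dimensional block of a point of `ℝ^{nd}`, as a vector of the Euclidean
space `ℝ^d`. -/
noncomputable def blkOf (n d : ℕ) (x : Fin n × Fin d → ℝ) (i : Fin n) :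
    EuclideanSpace ℝ (Fin d) :=
  (EuclideanSpace.equiv (Fin d) ℝ).symm (fun a => x (i, a))

/-- The anisotropic distance `d(x,y) = Σ_j |(x-y)_j|^{1/(1+α(j-1))}` on `ℝ^{nd}`
(`j : Fin n` is 0-indexed, so the exponent reads `1/(1+α j)`). -/
noncomputable def anisoDist (n d : ℕ) (α : ℝ) (x y : Fin n × Fin d → ℝ) : ℝ :=
  ∑ j : Fin n, ‖blkOf n d (x - y) j‖ ^ (1 / (1 + α * (j : ℕ)))

/-- `θ` is a flow started from `x` at time `t`, i.e. a continuous solution on `[t,T]` of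
`θ s = x + ∫_t^s (A θ_v + F(v, θ_v)) dv`. -/
def IsFlow (n d : ℕ) (T : ℝ) (A : Matrix (Fin n × Fin d) (Fin n × Fin d) ℝ)
    (F : ℝ → (Fin n × Fin d → ℝ) → (Fin n × Fin d → ℝ)) (t : ℝ)
    (x : Fin n × Fin d → ℝ) (θ : ℝ → Fin n × Fin d → ℝ) : Prop :=
  ContinuousOn θ (Set.Icc t T) ∧
  ∀ s ∈ Set.Icc t T, θ s = x + ∫ v in t..s, (A.mulVec (θ v) + F v (θ v))

/-!
Measure the difference of the two flows in units of the scale `δ = d(x, x')`, dividing block `i`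
by `δ ^ (1 + α i)`. In these units the initial difference is at most `n`, and both parts of the
drift cost at most a factor `δ ^ (-α)`: the sub-diagonal matrix moves block `i - 1` into block `i`,
and the Hölder exponent of `F_i` is at least the weight of block `i` minus `α`. Grönwall's lemma
then bounds the scaled difference at time `T` by
`2n exp (L δ ^ (-α) (T - t))` with `L` depending only on `A`, `K` and `n`, and this is at most
`2n exp L` because `T - t ≤ δ ^ α` in the off-diagonal regime.
-/

open Real Set Topology Matrix

lemma rpow_le_one_add_self {x γ : ℝ} (hx : 0 ≤ x) (hγ₀ : 0 ≤ γ) (hγ₁ : γ ≤ 1) :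
    x ^ γ ≤ 1 + x := by
  rcases le_total x 1 with h | h
  · linarith [rpow_le_one hx h hγ₀]
  · linarith [rpow_le_self_of_one_le h hγ₁]

lemma rpow_div_le_one_add_div_mul_rpow {δ b p e : ℝ} (hδ : 0 < δ) (hb : 0 ≤ b) (hp : 0 ≤ p)
    (hpe : p ≤ e) (he : 0 < e) : b ^ (p / e) ≤ (1 + b / δ ^ e) * δ ^ p := by
  have hw : 0 < δ ^ e := rpow_pos_of_pos hδ e
  calc b ^ (p / e) = (b / δ ^ e) ^ (p / e) * δ ^ p := by
        rw [div_rpow hb hw.le, ← rpow_mul hδ.le, mul_div_cancel₀ _ he.ne',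
          div_mul_cancel₀ _ (rpow_pos_of_pos hδ p).ne']
    _ ≤ (1 + b / δ ^ e) * δ ^ p := by
        gcongr
        exact rpow_le_one_add_self (by positivity) (by positivity) ((div_le_one he).2 hpe)

theorem le_mul_exp_of_le_add_integral {f : ℝ → ℝ} {a b t T : ℝ} (ha : 0 ≤ a)
    (hf : ContinuousOn f (Icc t T)) (h : ∀ s ∈ Icc t T, f s ≤ b + ∫ v in t..s, a * f v) :
    ∀ s ∈ Icc t T, f s ≤ b * exp (a * (s - t)) := by
  set R : ℝ → ℝ := fun s => b + ∫ v in t..s, a * f v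
  have hg : ContinuousOn (fun v => a * f v) (Icc t T) := hf.const_smul a
  have hR : ContinuousOn R (Icc t T) := by
    rcases le_or_gt t T with htT | hTt
    · rw [← uIcc_of_le htT] at hg ⊢
      exact continuousOn_const.add
        (intervalIntegral.continuousOn_primitive_interval (hg.integrableOn_compact isCompact_uIcc))
    · simp [Icc_eq_empty_of_lt hTt]
  have hR' : ∀ s ∈ Ico t T, HasDerivWithinAt R (a * f s) (Ici s) s := by
    intro s hs
    have hnhds : Icc t T ∈ 𝓝[>] s :=
      Filter.mem_of_superset (Icc_mem_nhdsGT hs.2) (Icc_subset_Icc_left hs.1)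
    refine (intervalIntegral.integral_hasDerivWithinAt_right (t := Ioi s) ?_ ?_ ?_).const_add b
    · exact (hg.mono (uIcc_subset_Icc ⟨le_rfl, hs.1.trans hs.2.le⟩ (Ico_subset_Icc_self hs)))
        |>.intervalIntegrable
    · exact (hg.stronglyMeasurableAtFilter_nhdsWithin measurableSet_Icc s).filter_mono
        (nhdsWithin_le_of_mem hnhds)
    · exact (hg s (Ico_subset_Icc_self hs)).mono_of_mem_nhdsWithin hnhds
  intro s hs
  have hRs := le_gronwallBound_of_liminf_deriv_right_le (δ := b) (K := a) (ε := 0) hR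
    (fun s hs _ hr => (hR' s hs).liminf_right_slope_le hr) (by simp [R])
    (fun s hs => by
      rw [add_zero]; exact mul_le_mul_of_nonneg_left (h s (Ico_subset_Icc_self hs)) ha) s hs
  rw [gronwallBound_ε0] at hRs
  exact (h s hs).trans hRs

noncomputable def blkCLM (n d : ℕ) (i : Fin n) :
    (Fin n × Fin d → ℝ) →L[ℝ] EuclideanSpace ℝ (Fin d) :=
  (EuclideanSpace.equiv (Fin d) ℝ).symm.toContinuousLinearMap ∘L
    ContinuousLinearMap.pi fun a => ContinuousLinearMap.proj (i, a)

section Blocks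

variable {n d : ℕ}

@[simp] lemma blkCLM_apply (i : Fin n) (x : Fin n × Fin d → ℝ) :
    blkCLM n d i x = blkOf n d x i := rfl

lemma blkOf_add (x y : Fin n × Fin d → ℝ) (i : Fin n) :
    blkOf n d (x + y) i = blkOf n d x i + blkOf n d y i := rfl

lemma blkOf_mulVec (A : Matrix (Fin n × Fin d) (Fin n × Fin d) ℝ) (z : Fin n × Fin d → ℝ)
    (i : Fin n) :
    blkOf n d (A *ᵥ z) i =
      ∑ j, toEuclideanCLM (𝕜 := ℝ) ((comp _ _ _ _ ℝ).symm A i j) (blkOf n d z j) := by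
  ext a
  simp [blkOf, mulVec, dotProduct, Fintype.sum_prod_type]

lemma anisoDist_nonneg (α : ℝ) (x y : Fin n × Fin d → ℝ) : 0 ≤ anisoDist n d α x y :=
  Finset.sum_nonneg fun _ _ => rpow_nonneg (norm_nonneg _) _

end Blocks

noncomputable def scaledNorm (n d : ℕ) (α δ : ℝ) (z : Fin n × Fin d → ℝ) : ℝ :=
  ∑ i : Fin n, ‖blkOf n d z i‖ / δ ^ (1 + α * (i : ℕ))

section ScaledNorm

variable {n d : ℕ} {α δ : ℝ}

lemma scaledNorm_nonneg (hδ : 0 ≤ δ) (z : Fin n × Fin d → ℝ) : 0 ≤ scaledNorm n d α δ z :=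
  Finset.sum_nonneg fun _ _ => div_nonneg (norm_nonneg _) (rpow_nonneg hδ _)

lemma norm_blkOf_le_scaledNorm_mul (hδ : 0 < δ) (z : Fin n × Fin d → ℝ) (k : Fin n) :
    ‖blkOf n d z k‖ ≤ scaledNorm n d α δ z * δ ^ (1 + α * (k : ℕ)) := by
  rw [← div_le_iff₀ (rpow_pos_of_pos hδ _)]
  exact Finset.single_le_sum (f := fun i : Fin n => ‖blkOf n d z i‖ / δ ^ (1 + α * (i : ℕ)))
    (fun _ _ => div_nonneg (norm_nonneg _) (rpow_nonneg hδ.le _)) (Finset.mem_univ k)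

lemma scaledNorm_add_le (hδ : 0 ≤ δ) (y z : Fin n × Fin d → ℝ) :
    scaledNorm n d α δ (y + z) ≤ scaledNorm n d α δ y + scaledNorm n d α δ z := by
  simp only [scaledNorm, ← Finset.sum_add_distrib, ← add_div, blkOf_add]
  gcongr with i
  exact norm_add_le _ _

lemma continuous_scaledNorm : Continuous (scaledNorm n d α δ) :=
  continuous_finsetSum _ fun i _ => ((blkCLM n d i).continuous.norm).div_const _

lemma scaledNorm_integral_le (hδ : 0 ≤ δ) {G : ℝ → Fin n × Fin d → ℝ} {t s : ℝ} (hts : t ≤ s)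
    (hG : IntervalIntegrable G volume t s) :
    scaledNorm n d α δ (∫ v in t..s, G v) ≤ ∫ v in t..s, scaledNorm n d α δ (G v) := by
  have hblk (i : Fin n) : IntervalIntegrable (fun v => blkOf n d (G v) i) volume t s :=
    ⟨(blkCLM n d i).integrable_comp hG.1, (blkCLM n d i).integrable_comp hG.2⟩
  simp only [scaledNorm]
  rw [intervalIntegral.integral_finsetSum fun i _ => ((hblk i).norm.div_const _)]
  gcongr with i
  rw [intervalIntegral.integral_div]
  gcongr
  rw [← blkCLM_apply, ← (blkCLM n d i).intervalIntegral_comp_comm hG]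
  exact intervalIntegral.norm_integral_le_integral_norm hts

lemma sum_rpow_le_add_scaledNorm_mul (hα : 0 ≤ α) (hδ : 0 < δ) (z : Fin n × Fin d → ℝ)
    (S : Finset (Fin n)) {p : ℝ} (hp : 0 ≤ p) (hpS : ∀ k ∈ S, p ≤ 1 + α * (k : ℕ)) :
    ∑ k ∈ S, ‖blkOf n d z k‖ ^ (p / (1 + α * (k : ℕ))) ≤ (n + scaledNorm n d α δ z) * δ ^ p := by
  calc ∑ k ∈ S, ‖blkOf n d z k‖ ^ (p / (1 + α * (k : ℕ)))
      ≤ ∑ k ∈ S, (1 + ‖blkOf n d z k‖ / δ ^ (1 + α * (k : ℕ))) * δ ^ p := by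
        gcongr with k hk
        exact rpow_div_le_one_add_div_mul_rpow hδ (norm_nonneg _) hp (hpS k hk) (by positivity)
    _ ≤ ∑ k, (1 + ‖blkOf n d z k‖ / δ ^ (1 + α * (k : ℕ))) * δ ^ p :=
        Finset.sum_le_sum_of_subset_of_nonneg (Finset.subset_univ S) fun _ _ _ => by positivity
    _ = (n + scaledNorm n d α δ z) * δ ^ p := by
        simp [scaledNorm, ← Finset.sum_mul, Finset.sum_add_distrib]

lemma anisoDist_le_add_scaledNorm_mul (hα : 0 ≤ α) (hδ : 0 < δ) (x y : Fin n × Fin d → ℝ) :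
    anisoDist n d α x y ≤ (n + scaledNorm n d α δ (x - y)) * δ := by
  have h := sum_rpow_le_add_scaledNorm_mul hα hδ (x - y) Finset.univ zero_le_one
    fun k _ => by simp only [le_add_iff_nonneg_right]; positivity
  rwa [rpow_one] at h

lemma scaledNorm_sub_le_of_anisoDist (hα : 0 ≤ α) (x y : Fin n × Fin d → ℝ)
    (hδ : 0 < anisoDist n d α x y) :
    scaledNorm n d α (anisoDist n d α x y) (x - y) ≤ n := by
  calc scaledNorm n d α (anisoDist n d α x y) (x - y) ≤ ∑ _i : Fin n, (1 : ℝ) := by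
        refine Finset.sum_le_sum fun i _ => div_le_one_of_le₀ ?_ (by positivity)
        have he : 0 < 1 + α * (i : ℕ) := by positivity
        calc ‖blkOf n d (x - y) i‖
            = (‖blkOf n d (x - y) i‖ ^ (1 / (1 + α * (i : ℕ)))) ^ (1 + α * (i : ℕ)) := by
              rw [← rpow_mul (norm_nonneg _), one_div_mul_cancel he.ne', rpow_one]
          _ ≤ anisoDist n d α x y ^ (1 + α * (i : ℕ)) := by
              gcongr
              exact Finset.single_le_sum
                (f := fun j : Fin n => ‖blkOf n d (x - y) j‖ ^ (1 / (1 + α * (j : ℕ))))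
                (fun _ _ => rpow_nonneg (norm_nonneg _) _) (Finset.mem_univ i)
    _ = n := by simp

end ScaledNorm

/-- `(comp _ _ _ _ ℝ).symm A i j` is the `(i, j)` block of `A`, a `d × d` matrix. -/
noncomputable def blockNormSum {n d : ℕ} (A : Matrix (Fin n × Fin d) (Fin n × Fin d) ℝ) : ℝ :=
  ∑ i, ∑ j, ‖toEuclideanCLM (𝕜 := ℝ) ((comp _ _ _ _ ℝ).symm A i j)‖

section SubDiagonal

variable {n d : ℕ} {α δ : ℝ} {A : Matrix (Fin n × Fin d) (Fin n × Fin d) ℝ}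

lemma norm_blkOf_mulVec_le
    (hA : ∀ (i j : Fin n) (a b : Fin d), (j : ℕ) + 1 ≠ (i : ℕ) → A (i, a) (j, b) = 0)
    (hδ : 0 < δ) (z : Fin n × Fin d → ℝ) (i : Fin n) :
    ‖blkOf n d (A *ᵥ z) i‖ ≤
      (∑ j, ‖toEuclideanCLM (𝕜 := ℝ) ((comp _ _ _ _ ℝ).symm A i j)‖) * δ ^ (-α) *
        scaledNorm n d α δ z * δ ^ (1 + α * (i : ℕ)) := by
  rw [blkOf_mulVec, Finset.sum_mul, Finset.sum_mul, Finset.sum_mul]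
  refine (norm_sum_le _ _).trans (Finset.sum_le_sum fun j _ => ?_)
  refine (ContinuousLinearMap.le_opNorm _ _).trans ?_
  by_cases hij : (j : ℕ) + 1 = i
  · have hw : δ ^ (-α) * δ ^ (1 + α * (i : ℕ)) = δ ^ (1 + α * (j : ℕ)) := by
      rw [← rpow_add hδ, ← hij]
      push_cast
      ring_nf
    rw [mul_assoc, mul_assoc, mul_left_comm _ (scaledNorm n d α δ z), hw]
    gcongr
    exact norm_blkOf_le_scaledNorm_mul hδ z j
  · have hB : (comp _ _ _ _ ℝ).symm A i j = 0 := by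
      ext a b
      exact hA i j a b hij
    simp [hB]

lemma scaledNorm_mulVec_le
    (hA : ∀ (i j : Fin n) (a b : Fin d), (j : ℕ) + 1 ≠ (i : ℕ) → A (i, a) (j, b) = 0)
    (hδ : 0 < δ) (z : Fin n × Fin d → ℝ) :
    scaledNorm n d α δ (A *ᵥ z) ≤ blockNormSum A * δ ^ (-α) * scaledNorm n d α δ z := by
  rw [blockNormSum, Finset.sum_mul, Finset.sum_mul]
  exact Finset.sum_le_sum fun i _ =>
    (div_le_iff₀ (rpow_pos_of_pos hδ _)).2 (norm_blkOf_mulVec_le hA hδ z i)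

end SubDiagonal

section Holder

variable {n d : ℕ} {α β K δ : ℝ}

lemma norm_le_of_holder_bound (hα : 0 ≤ α) (hK : 0 ≤ K) (hδ : 0 < δ) (hδ1 : δ ≤ 1)
    {b : EuclideanSpace ℝ (Fin d)} {z : Fin n × Fin d → ℝ} {S : Finset (Fin n)} {p e : ℝ}
    (hp : 0 ≤ p) (hpS : ∀ k ∈ S, p ≤ 1 + α * (k : ℕ)) (hep : e - α ≤ p)
    (hb : ‖b‖ ≤ K * ∑ k ∈ S, ‖blkOf n d z k‖ ^ (p / (1 + α * (k : ℕ)))) :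
    ‖b‖ ≤ K * δ ^ (-α) * (n + scaledNorm n d α δ z) * δ ^ e := by
  calc ‖b‖ ≤ K * ((n + scaledNorm n d α δ z) * δ ^ p) :=
        hb.trans (by gcongr; exact sum_rpow_le_add_scaledNorm_mul hα hδ z S hp hpS)
    _ ≤ K * ((n + scaledNorm n d α δ z) * δ ^ (-α + e)) := by
        have := scaledNorm_nonneg hδ.le (α := α) z
        have : δ ^ p ≤ δ ^ (-α + e) := rpow_le_rpow_of_exponent_ge hδ hδ1 (by linarith)
        gcongr
    _ = K * δ ^ (-α) * (n + scaledNorm n d α δ z) * δ ^ e := by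
        rw [rpow_add hδ]; ring

lemma scaledNorm_le_of_holder (hn : 1 ≤ n) (hα : 0 ≤ α) (hβ₀ : 0 ≤ β) (hβ₁ : β ≤ 1)
    (hαβ : 1 ≤ α + β) (hβα : β ≤ α) (hK : 0 ≤ K) (hδ : 0 < δ) (hδ1 : δ ≤ 1)
    {b z : Fin n × Fin d → ℝ}
    (h₀ : ‖blkOf n d b ⟨0, hn⟩‖ ≤
      K * ∑ k : Fin n, ‖blkOf n d z k‖ ^ (β / (1 + α * (k : ℕ))))
    (hᵢ : ∀ i : Fin n, 1 ≤ (i : ℕ) → ‖blkOf n d b i‖ ≤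
      K * ∑ k ∈ Finset.univ.filter (fun k : Fin n => i ≤ k),
        ‖blkOf n d z k‖ ^ ((1 + α * ((i : ℕ) - 1 : ℝ) + β) / (1 + α * (k : ℕ)))) :
    scaledNorm n d α δ b ≤ n * (K * δ ^ (-α) * (n + scaledNorm n d α δ z)) := by
  suffices h : ∀ i : Fin n, ‖blkOf n d b i‖ ≤
      K * δ ^ (-α) * (n + scaledNorm n d α δ z) * δ ^ (1 + α * (i : ℕ)) by
    calc scaledNorm n d α δ b ≤ ∑ _i : Fin n, K * δ ^ (-α) * (n + scaledNorm n d α δ z) :=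
          Finset.sum_le_sum fun i _ => (div_le_iff₀ (rpow_pos_of_pos hδ _)).2 (h i)
      _ = _ := by simp
  intro i
  rcases Nat.eq_zero_or_pos i with hi | hi
  · obtain rfl : i = ⟨0, hn⟩ := Fin.ext hi
    refine norm_le_of_holder_bound hα hK hδ hδ1 hβ₀ (fun k _ => ?_) (by simp; linarith) h₀
    have : 0 ≤ α * (k : ℕ) := by positivity
    linarith
  · have hi' : (1 : ℝ) ≤ (i : ℕ) := by exact_mod_cast hi
    refine norm_le_of_holder_bound hα hK hδ hδ1 (by nlinarith) (fun k hk => ?_) (by linarith)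
      (hᵢ i hi)
    have hik : ((i : ℕ) : ℝ) ≤ (k : ℕ) := by exact_mod_cast (Finset.mem_filter.1 hk).2
    nlinarith

end Holder

section Flow

variable {n d : ℕ} {T t : ℝ} {A : Matrix (Fin n × Fin d) (Fin n × Fin d) ℝ}
  {F : ℝ → (Fin n × Fin d → ℝ) → (Fin n × Fin d → ℝ)} {x x' : Fin n × Fin d → ℝ}
  {θ θ' : ℝ → Fin n × Fin d → ℝ}

lemma IsFlow.apply_left (hθ : IsFlow n d T A F t x θ) (htT : t ≤ T) : θ t = x := by
  simpa using hθ.2 t ⟨le_rfl, htT⟩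

lemma IsFlow.continuousOn_F (hθ : IsFlow n d T A F t x θ) (ht : 0 ≤ t)
    (hFc : ContinuousOn (fun p : ℝ × (Fin n × Fin d → ℝ) => F p.1 p.2) (Icc 0 T ×ˢ univ)) :
    ContinuousOn (fun v => F v (θ v)) (Icc t T) :=
  hFc.comp (continuousOn_id.prodMk hθ.1) fun _ hv => ⟨⟨ht.trans hv.1, hv.2⟩, mem_univ _⟩

lemma IsFlow.sub_eq_add_integral (hθ : IsFlow n d T A F t x θ) (hθ' : IsFlow n d T A F t x' θ')
    (ht : 0 ≤ t)
    (hFc : ContinuousOn (fun p : ℝ × (Fin n × Fin d → ℝ) => F p.1 p.2) (Icc 0 T ×ˢ univ))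
    {s : ℝ} (hs : s ∈ Icc t T) :
    θ s - θ' s = x - x' + ∫ v in t..s, (A *ᵥ (θ v - θ' v) + (F v (θ v) - F v (θ' v))) := by
  have hsub : uIcc t s ⊆ Icc t T := by
    rw [uIcc_of_le hs.1]; exact Icc_subset_Icc_right hs.2
  have hint {y : Fin n × Fin d → ℝ} {φ : ℝ → Fin n × Fin d → ℝ} (hφ : IsFlow n d T A F t y φ) :
      IntervalIntegrable (fun v => A *ᵥ φ v + F v (φ v)) volume t s :=
    (((continuous_const.matrix_mulVec continuous_id).comp_continuousOn hφ.1).add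
      (hφ.continuousOn_F ht hFc) |>.mono hsub).intervalIntegrable
  rw [hθ.2 s hs, hθ'.2 s hs, add_sub_add_comm, ← intervalIntegral.integral_sub (hint hθ) (hint hθ')]
  congr 1
  refine intervalIntegral.integral_congr fun v _ => ?_
  simp only [mulVec_sub]
  abel

lemma IsFlow.add_scaledNorm_sub_le_integral {α β K δ : ℝ}
    (hθ : IsFlow n d T A F t x θ) (hθ' : IsFlow n d T A F t x' θ') (ht : 0 ≤ t)
    (hn : 1 ≤ n) (hα : 0 ≤ α) (hβ₀ : 0 ≤ β) (hβ₁ : β ≤ 1) (hαβ : 1 ≤ α + β) (hβα : β ≤ α)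
    (hK : 0 ≤ K) (hδ : 0 < δ) (hδ1 : δ ≤ 1)
    (hA : ∀ (i j : Fin n) (a b : Fin d), (j : ℕ) + 1 ≠ (i : ℕ) → A (i, a) (j, b) = 0)
    (hFc : ContinuousOn (fun p : ℝ × (Fin n × Fin d → ℝ) => F p.1 p.2) (Icc 0 T ×ˢ univ))
    (hF1 : ∀ v ∈ Icc (0 : ℝ) T, ∀ y y' : Fin n × Fin d → ℝ,
      ‖blkOf n d (F v y - F v y') ⟨0, hn⟩‖ ≤
        K * ∑ k : Fin n, ‖blkOf n d (y - y') k‖ ^ (β / (1 + α * (k : ℕ))))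
    (hFi : ∀ i : Fin n, 1 ≤ (i : ℕ) → ∀ v ∈ Icc (0 : ℝ) T, ∀ y y' : Fin n × Fin d → ℝ,
      ‖blkOf n d (F v y - F v y') i‖ ≤
        K * ∑ k ∈ Finset.univ.filter (fun k : Fin n => i ≤ k),
          ‖blkOf n d (y - y') k‖ ^ ((1 + α * ((i : ℕ) - 1 : ℝ) + β) / (1 + α * (k : ℕ))))
    (hx : scaledNorm n d α δ (x - x') ≤ n) {s : ℝ} (hs : s ∈ Icc t T) :
    n + scaledNorm n d α δ (θ s - θ' s) ≤
      2 * n + ∫ v in t..s,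
        (blockNormSum A + n * K) * δ ^ (-α) * (n + scaledNorm n d α δ (θ v - θ' v)) := by
  set N := scaledNorm n d α δ
  set G := fun v => A *ᵥ (θ v - θ' v) + (F v (θ v) - F v (θ' v))
  have hsub : uIcc t s ⊆ Icc t T := by
    rw [uIcc_of_le hs.1]; exact Icc_subset_Icc_right hs.2
  have hη : ContinuousOn (fun v => θ v - θ' v) (Icc t T) := hθ.1.sub hθ'.1
  have hG : ContinuousOn G (Icc t T) :=
    ((continuous_const.matrix_mulVec continuous_id).comp_continuousOn hη).add
      ((hθ.continuousOn_F ht hFc).sub (hθ'.continuousOn_F ht hFc))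
  have hGbound : ∀ v ∈ Icc t T,
      N (G v) ≤ (blockNormSum A + n * K) * δ ^ (-α) * (n + N (θ v - θ' v)) := by
    intro v hv
    have hv₀ : v ∈ Icc 0 T := ⟨ht.trans hv.1, hv.2⟩
    have hCA : 0 ≤ blockNormSum A := by unfold blockNormSum; positivity
    calc N (G v) ≤ N (A *ᵥ (θ v - θ' v)) + N (F v (θ v) - F v (θ' v)) :=
          scaledNorm_add_le hδ.le _ _
      _ ≤ blockNormSum A * δ ^ (-α) * N (θ v - θ' v) + n * (K * δ ^ (-α) * (n + N (θ v - θ' v))) :=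
          add_le_add (scaledNorm_mulVec_le hA hδ _) (scaledNorm_le_of_holder hn hα hβ₀ hβ₁ hαβ
            hβα hK hδ hδ1 (hF1 v hv₀ _ _) fun i hi => hFi i hi v hv₀ _ _)
      _ ≤ (blockNormSum A + n * K) * δ ^ (-α) * (n + N (θ v - θ' v)) := by
          have : 0 ≤ blockNormSum A * δ ^ (-α) * n := by positivity
          linarith
  have hGint : ∫ v in t..s, N (G v) ≤
      ∫ v in t..s, (blockNormSum A + n * K) * δ ^ (-α) * (n + N (θ v - θ' v)) :=
    intervalIntegral.integral_mono_on hs.1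
      ((continuous_scaledNorm.comp_continuousOn hG).mono hsub).intervalIntegrable
      ((continuousOn_const.mul (continuousOn_const.add
        (continuous_scaledNorm.comp_continuousOn hη))).mono hsub).intervalIntegrable
      fun v hv => hGbound v (hsub (Icc_subset_uIcc hv))
  calc n + N (θ s - θ' s) = n + N (x - x' + ∫ v in t..s, G v) := by
        rw [hθ.sub_eq_add_integral hθ' ht hFc hs]
    _ ≤ n + (N (x - x') + ∫ v in t..s, N (G v)) := by
        gcongr
        exact (scaledNorm_add_le hδ.le _ _).trans
          (by gcongr; exact scaledNorm_integral_le hδ.le hs.1 (hG.mono hsub).intervalIntegrable)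
    _ ≤ _ := by linarith

end Flow

theorem flow_offdiagonal_sensitivity_general (n d : ℕ) (hn : 1 ≤ n)
    (α β T : ℝ) (hα : α ∈ Set.Ioo (0 : ℝ) 2) (hβ : β ∈ Set.Ioo (0 : ℝ) 1)
    (hαβ : α + β ∈ Set.Ioo (1 : ℝ) 2) (hβα : β < α)
    (A : Matrix (Fin n × Fin d) (Fin n × Fin d) ℝ)
    (hA : ∀ (i j : Fin n) (a b : Fin d), (j : ℕ) + 1 ≠ (i : ℕ) → A (i, a) (j, b) = 0)
    (F : ℝ → (Fin n × Fin d → ℝ) → (Fin n × Fin d → ℝ))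
    (hFc : ContinuousOn (fun p : ℝ × (Fin n × Fin d → ℝ) => F p.1 p.2)
      (Set.Icc 0 T ×ˢ Set.univ))
    (K : ℝ) (hK : 0 ≤ K)
    (hF1 : ∀ t ∈ Set.Icc (0 : ℝ) T, ∀ x x' : Fin n × Fin d → ℝ,
      ‖blkOf n d (F t x - F t x') ⟨0, hn⟩‖ ≤
        K * ∑ k : Fin n, ‖blkOf n d (x - x') k‖ ^ (β / (1 + α * (k : ℕ))))
    (hFi : ∀ i : Fin n, 1 ≤ (i : ℕ) → ∀ t ∈ Set.Icc (0 : ℝ) T, ∀ x x' : Fin n × Fin d → ℝ,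
      ‖blkOf n d (F t x - F t x') i‖ ≤
        K * ∑ k ∈ Finset.univ.filter (fun k : Fin n => i ≤ k),
          ‖blkOf n d (x - x') k‖ ^ ((1 + α * ((i : ℕ) - 1 : ℝ) + β) / (1 + α * (k : ℕ)))) :
    ∃ C : ℝ, 1 ≤ C ∧
      ∀ t : ℝ, t ∈ Set.Icc 0 T →
      ∀ c₀ : ℝ, 0 < c₀ → c₀ ≤ 1 →
      ∀ x x' : Fin n × Fin d → ℝ, anisoDist n d α x x' ≤ 1 →
        T - t ≤ c₀ * anisoDist n d α x x' ^ α →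
      ∀ θ θ' : ℝ → Fin n × Fin d → ℝ,
        IsFlow n d T A F t x θ → IsFlow n d T A F t x' θ' →
        anisoDist n d α (θ T) (θ' T) ≤ C * anisoDist n d α x x' := by
  set L := blockNormSum A + n * K
  have hL : 0 ≤ L := by unfold L blockNormSum; positivity
  have hn' : (1 : ℝ) ≤ n := by exact_mod_cast hn
  refine ⟨2 * n * exp L, by nlinarith [one_le_exp hL], ?_⟩
  intro t ht c₀ hc₀ hc₀1 x x' hδ1 hoff θ θ' hθ hθ'
  rcases (anisoDist_nonneg α x x').eq_or_lt with hδ | hδ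
  · obtain rfl : t = T := by
      rw [← hδ, zero_rpow hα.1.ne', mul_zero] at hoff
      linarith [ht.2]
    rw [hθ.apply_left le_rfl, hθ'.apply_left le_rfl, ← hδ, mul_zero]
  set δ := anisoDist n d α x x'
  have hgron := le_mul_exp_of_le_add_integral
    (f := fun s => n + scaledNorm n d α δ (θ s - θ' s)) (by positivity)
    (continuousOn_const.add (continuous_scaledNorm.comp_continuousOn (hθ.1.sub hθ'.1)))
    (fun s hs => hθ.add_scaledNorm_sub_le_integral hθ' ht.1 hn hα.1.le hβ.1.le hβ.2.le
      hαβ.1.le hβα.le hK hδ hδ1 hA hFc hF1 hFi (scaledNorm_sub_le_of_anisoDist hα.1.le x x' hδ) hs)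
    T ⟨ht.2, le_rfl⟩
  have hexp : L * δ ^ (-α) * (T - t) ≤ L := by
    have : δ ^ (-α) * (T - t) ≤ 1 := by
      calc δ ^ (-α) * (T - t) ≤ δ ^ (-α) * δ ^ α := by gcongr; nlinarith [rpow_nonneg hδ.le α]
        _ = 1 := by rw [← rpow_add hδ, neg_add_cancel, rpow_zero]
    nlinarith
  calc anisoDist n d α (θ T) (θ' T) ≤ (n + scaledNorm n d α δ (θ T - θ' T)) * δ :=
        anisoDist_le_add_scaledNorm_mul hα.1.le hδ _ _
    _ ≤ 2 * n * exp (L * δ ^ (-α) * (T - t)) * δ := by gcongr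
    _ ≤ 2 * n * exp L * δ := by gcongr

/-- Off-diagonal sensitivity of the flows: under the off-diagonal condition
`T - t ≤ c₀ d(x,x')^α` with `c₀ ∈ (0,1]`, one has `d(θ_{t,T}(x), θ_{t,T}(x')) ≤ C d(x,x')`,
with `C` depending only on the data `n, d, α, β, A, K`. -/
theorem flow_offdiagonal_sensitivity (n d : ℕ) (hn : 1 ≤ n) (hd : 1 ≤ d)
    (α β T : ℝ) (hα : α ∈ Set.Ioo (0 : ℝ) 2) (hβ : β ∈ Set.Ioo (0 : ℝ) 1)
    (hαβ : α + β ∈ Set.Ioo (1 : ℝ) 2) (hβα : β < α) (hT0 : 0 < T) (hT1 : T ≤ 1)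
    (A : Matrix (Fin n × Fin d) (Fin n × Fin d) ℝ)
    (hA : ∀ (i j : Fin n) (a b : Fin d), (j : ℕ) + 1 ≠ (i : ℕ) → A (i, a) (j, b) = 0)
    (F : ℝ → (Fin n × Fin d → ℝ) → (Fin n × Fin d → ℝ))
    (hFc : ContinuousOn (fun p : ℝ × (Fin n × Fin d → ℝ) => F p.1 p.2)
      (Set.Icc 0 T ×ˢ Set.univ))
    (hFstruct : ∀ (i : Fin n) (t : ℝ) (x y : Fin n × Fin d → ℝ),
      (∀ k : Fin n, i ≤ k → blkOf n d x k = blkOf n d y k) →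
      blkOf n d (F t x) i = blkOf n d (F t y) i)
    (K : ℝ) (hK : 0 ≤ K)
    (hF1 : ∀ t ∈ Set.Icc (0 : ℝ) T, ∀ x x' : Fin n × Fin d → ℝ,
      ‖blkOf n d (F t x - F t x') ⟨0, hn⟩‖ ≤
        K * ∑ k : Fin n, ‖blkOf n d (x - x') k‖ ^ (β / (1 + α * (k : ℕ))))
    (hFi : ∀ i : Fin n, 1 ≤ (i : ℕ) → ∀ t ∈ Set.Icc (0 : ℝ) T, ∀ x x' : Fin n × Fin d → ℝ,
      ‖blkOf n d (F t x - F t x') i‖ ≤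
        K * ∑ k ∈ Finset.univ.filter (fun k : Fin n => i ≤ k),
          ‖blkOf n d (x - x') k‖ ^ ((1 + α * ((i : ℕ) - 1 : ℝ) + β) / (1 + α * (k : ℕ)))) :
    ∃ C : ℝ, 1 ≤ C ∧
      ∀ t : ℝ, t ∈ Set.Icc 0 T →
      ∀ c₀ : ℝ, 0 < c₀ → c₀ ≤ 1 →
      ∀ x x' : Fin n × Fin d → ℝ, anisoDist n d α x x' ≤ 1 →
        T - t ≤ c₀ * anisoDist n d α x x' ^ α →
      ∀ θ θ' : ℝ → Fin n × Fin d → ℝ,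
        IsFlow n d T A F t x θ → IsFlow n d T A F t x' θ' →
        anisoDist n d α (θ T) (θ' T) ≤ C * anisoDist n d α x x' :=
  flow_offdiagonal_sensitivity_general n d hn α β T hα hβ hαβ hβα A hA F hFc K hK hF1 hFi
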